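/- arXiv:1504.03222 — 2 statements merged into one kernel-verified Lean document; each statement's English description precedes it below -/
import Mathlib

section
/- Let A be an associative unital ring and let s1, s2 ∈ A be idempotents (s1² = s1 and s2² = s2). Then for every integer j ≥ 1 one has ⟨1−s1, 1−s2⟩^j = 1 + Σ_{i=1}^{j−1} (−1)^i (⟨s1,s2⟩^i + ⟨s2,s1⟩^i) + (−1)^j ⟨s1,s2⟩^j, and symmetrically ⟨1−s2, 1−s1⟩^j = 1 + Σ_{i=1}^{j−1} (−1)^i (⟨s1,s2⟩^i + ⟨s2,s1⟩^i) + (−1)^j ⟨s2,s1⟩^j. -/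
/-- The alternating product `⟨t,s⟩^k` with `k` factors whose rightmost factor is `s`:
`⟨t,s⟩^{2i} = (ts)^i` and `⟨t,s⟩^{2i+1} = s(ts)^i`. -/
def altProd {A : Type*} [Monoid A] (t s : A) (k : ℕ) : A :=
  if Even k then (t * s) ^ (k / 2) else s * (t * s) ^ (k / 2)

/-!
Write `a i = ⟨s1,s2⟩^i`, `b i = ⟨s2,s1⟩^i` and `S n = Σ_{i=1}^{n} (-1)^i (a i + b i)`, which is
symmetric in `s1, s2`. Peeling off the rightmost factor, `⟨1-s1,1-s2⟩^{n+2} = ⟨1-s2,1-s1⟩^{n+1} (1-s2)`,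
so both identities follow by one induction on `n` over all pairs of idempotents. The only
non-trivial input is `S n * s2 = -s2 - (-1)^(n+1) a (n+1)`: since `s2` is idempotent and
`a i, b i` end in `s2` resp. `s1`, we get `(a i + b i) s2 = a i + a (i+1)`, and the sum telescopes.
-/

open Finset

section

variable {A : Type*}

section Monoid

variable [Monoid A] (t s : A)

lemma altProd_two_mul (m : ℕ) : altProd t s (2 * m) = (t * s) ^ m := by
  rw [altProd, if_pos (even_two_mul m), Nat.mul_div_cancel_left m two_pos]

lemma altProd_two_mul_add_one (m : ℕ) : altProd t s (2 * m + 1) = s * (t * s) ^ m := by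
  rw [altProd, if_neg (Nat.not_even_two_mul_add_one m), Nat.mul_add_div two_pos,
    Nat.div_eq_of_lt one_lt_two, add_zero]

@[simp]
lemma altProd_one : altProd t s 1 = s := by
  simpa using altProd_two_mul_add_one t s 0

lemma altProd_succ (k : ℕ) : altProd t s (k + 1) = altProd s t k * s := by
  obtain ⟨m, rfl | rfl⟩ := Nat.even_or_odd' k
  · rw [altProd_two_mul_add_one, altProd_two_mul, mul_pow_mul]
  · rw [show 2 * m + 1 + 1 = 2 * (m + 1) by ring, altProd_two_mul, altProd_two_mul_add_one,
      mul_assoc, mul_pow_mul, ← mul_assoc, ← pow_succ']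

lemma altProd_mul_of_isIdempotentElem {s : A} (hs : IsIdempotentElem s) {k : ℕ} (hk : 1 ≤ k) :
    altProd t s k * s = altProd t s k := by
  obtain ⟨m, rfl⟩ := Nat.exists_eq_add_of_le' hk
  rw [altProd_succ, mul_assoc, hs.eq]

end Monoid

section Ring

variable [Ring A]

lemma sum_Icc_neg_one_pow_mul_add_succ (f : ℕ → A) (n : ℕ) :
    ∑ i ∈ Icc 1 n, (-1 : A) ^ i * (f i + f (i + 1)) = -f 1 - (-1 : A) ^ (n + 1) * f (n + 1) := by
  induction n with
  | zero => simp
  | succ n ih =>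
    rw [sum_Icc_succ_top (by omega), ih, pow_succ, pow_succ]
    noncomm_ring

def altSum (s1 s2 : A) (n : ℕ) : A :=
  ∑ i ∈ Icc 1 n, (-1 : A) ^ i * (altProd s1 s2 i + altProd s2 s1 i)

lemma altSum_comm (s1 s2 : A) (n : ℕ) : altSum s1 s2 n = altSum s2 s1 n := by
  simp only [altSum, add_comm]

lemma altSum_succ (s1 s2 : A) (n : ℕ) :
    altSum s1 s2 (n + 1) =
      altSum s1 s2 n + (-1 : A) ^ (n + 1) * (altProd s1 s2 (n + 1) + altProd s2 s1 (n + 1)) :=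
  sum_Icc_succ_top (by omega) _

lemma altSum_mul_of_isIdempotentElem (s1 : A) {s2 : A} (hs2 : IsIdempotentElem s2) (n : ℕ) :
    altSum s1 s2 n * s2 = -s2 - (-1 : A) ^ (n + 1) * altProd s1 s2 (n + 1) := by
  have hterm : ∀ i ∈ Icc 1 n, (-1 : A) ^ i * (altProd s1 s2 i + altProd s2 s1 i) * s2 =
      (-1 : A) ^ i * (altProd s1 s2 i + altProd s1 s2 (i + 1)) := by
    intro i hi
    rw [mul_assoc, add_mul, altProd_mul_of_isIdempotentElem s1 hs2 (mem_Icc.mp hi).1,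
      altProd_succ s1 s2 i]
  rw [altSum, sum_mul, sum_congr rfl hterm, sum_Icc_neg_one_pow_mul_add_succ, altProd_one]

lemma altProd_one_sub_succ {s1 s2 : A} (hs1 : IsIdempotentElem s1) (hs2 : IsIdempotentElem s2)
    (n : ℕ) :
    altProd (1 - s1) (1 - s2) (n + 1) =
      1 + altSum s1 s2 n + (-1 : A) ^ (n + 1) * altProd s1 s2 (n + 1) := by
  induction n generalizing s1 s2 with
  | zero => simp [altSum, sub_eq_add_neg]
  | succ n ih =>
    rw [altProd_succ, ih hs2 hs1, altSum_comm s2 s1, altSum_succ, altProd_succ s1 s2 (n + 1),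
      mul_sub, mul_one, add_mul, add_mul, one_mul, altSum_mul_of_isIdempotentElem s1 hs2,
      mul_assoc, pow_succ]
    noncomm_ring

end Ring

end

/-- For idempotents `s1, s2` in an associative unital ring and every `j ≥ 1`,
`⟨1−s1, 1−s2⟩^j = 1 + Σ_{i=1}^{j−1} (−1)^i (⟨s1,s2⟩^i + ⟨s2,s1⟩^i) + (−1)^j ⟨s1,s2⟩^j`,
and symmetrically with the roles of `s1` and `s2` exchanged. -/
theorem stmt0 {A : Type*} [Ring A] (s1 s2 : A)
    (h1 : s1 * s1 = s1) (h2 : s2 * s2 = s2) (j : ℕ) (hj : 1 ≤ j) :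
    altProd (1 - s1) (1 - s2) j =
        1 + (∑ i ∈ Finset.Icc 1 (j - 1), (-1 : A) ^ i * (altProd s1 s2 i + altProd s2 s1 i))
          + (-1 : A) ^ j * altProd s1 s2 j ∧
    altProd (1 - s2) (1 - s1) j =
        1 + (∑ i ∈ Finset.Icc 1 (j - 1), (-1 : A) ^ i * (altProd s1 s2 i + altProd s2 s1 i))
          + (-1 : A) ^ j * altProd s2 s1 j := by
  obtain ⟨n, rfl⟩ := Nat.exists_eq_add_of_le' hj
  refine ⟨altProd_one_sub_succ h1 h2 n, ?_⟩
  rw [altProd_one_sub_succ h2 h1 n, altSum_comm, Nat.add_sub_cancel, altSum]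
end

section
/- Let T1 and T2 be reduction operators relative to Y, let k ≥ 1 be an integer, and let w ∈ Y be such that T1(w) ≠ w and T2(w) ≠ w. Then lm(⟨id−T1, id−T2⟩^k(w)) = w; that is, ⟨id−T1, id−T2⟩^k(w) equals w plus a linear combination of elements of Y strictly smaller than w. -/
/-- A *reduction operator relative to `Y`* (a finite totally ordered set): a linear projector
`T` of `KY` such that for every `y ∈ Y`, either `T(y) = y` or `T(y) < y`, where `v < y` means
that `v = 0` or the leading (greatest) basis element of `v` is smaller than `y`; equivalently
every element of the support of `T(y)` is strictly smaller than `y`. -/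
def IsReductionOperator {K Y : Type*} [Field K] [Fintype Y] [LinearOrder Y]
    (T : (Y →₀ K) →ₗ[K] (Y →₀ K)) : Prop :=
  T ∘ₗ T = T ∧
    ∀ y : Y, T (Finsupp.single y 1) = Finsupp.single y 1 ∨
      ∀ z ∈ (T (Finsupp.single y 1)).support, z < y

theorem altProd_mem_closure {A : Type*} [Monoid A] (t s : A) (k : ℕ) :
    altProd t s k ∈ Submonoid.closure {t, s} := by
  have ht : t ∈ Submonoid.closure {t, s} := Submonoid.subset_closure (by simp)
  have hs : s ∈ Submonoid.closure {t, s} := Submonoid.subset_closure (by simp)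
  unfold altProd
  split_ifs
  · exact pow_mem (mul_mem ht hs) _
  · exact mul_mem hs (pow_mem (mul_mem ht hs) _)

section ReductionOperator

variable {K Y : Type*} [Field K] [LinearOrder Y]

def LeadsWith (w : Y) (v : Y →₀ K) : Prop :=
  v - Finsupp.single w 1 ∈ Finsupp.supported K K (Set.Iio w)

theorem leadsWith_single (w : Y) : LeadsWith w (Finsupp.single w (1 : K)) := by
  simp [LeadsWith]

variable [Fintype Y]

theorem IsReductionOperator.apply_single_mem_supported_Iio {T : (Y →₀ K) →ₗ[K] (Y →₀ K)}
    (hT : IsReductionOperator T) {y : Y} (hy : T (Finsupp.single y 1) ≠ Finsupp.single y 1) :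
    T (Finsupp.single y 1) ∈ Finsupp.supported K K (Set.Iio y) :=
  (hT.2 y).resolve_left hy

theorem IsReductionOperator.map_supported_Iio_le {T : (Y →₀ K) →ₗ[K] (Y →₀ K)}
    (hT : IsReductionOperator T) (w : Y) :
    (Finsupp.supported K K (Set.Iio w)).map T ≤ Finsupp.supported K K (Set.Iio w) := by
  rw [Finsupp.supported_eq_span_single, Submodule.map_span_le]
  rintro _ ⟨y, hyw, rfl⟩
  rw [← Finsupp.supported_eq_span_single]
  rcases hT.2 y with hfix | hlt
  · rw [hfix]
    simpa [Finsupp.mem_supported] using hyw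
  · exact fun z hz => lt_trans (hlt z hz) hyw

theorem IsReductionOperator.leadsWith_one_sub_apply {T : (Y →₀ K) →ₗ[K] (Y →₀ K)}
    (hT : IsReductionOperator T) {w : Y}
    (hw : T (Finsupp.single w 1) ≠ Finsupp.single w 1) {v : Y →₀ K} (hv : LeadsWith w v) :
    LeadsWith w ((1 - T) v) := by
  have hTv : T (v - Finsupp.single w 1) ∈ Finsupp.supported K K (Set.Iio w) :=
    hT.map_supported_Iio_le w (Submodule.mem_map_of_mem hv)
  have hTw := hT.apply_single_mem_supported_Iio hw
  have hdecomp : (1 - T) v - Finsupp.single w 1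
      = (v - Finsupp.single w 1) - T (v - Finsupp.single w 1) - T (Finsupp.single w 1) := by
    simp only [LinearMap.sub_apply, Module.End.one_apply, map_sub]
    abel
  unfold LeadsWith
  rw [hdecomp]
  exact sub_mem (sub_mem hv hTv) hTw

end ReductionOperator

theorem stmt2_general {K Y : Type*} [Field K] [Fintype Y] [LinearOrder Y]
    (T1 T2 : (Y →₀ K) →ₗ[K] (Y →₀ K))
    (h1 : IsReductionOperator T1) (h2 : IsReductionOperator T2)
    (k : ℕ) (w : Y)
    (hw1 : T1 (Finsupp.single w 1) ≠ Finsupp.single w 1)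
    (hw2 : T2 (Finsupp.single w 1) ≠ Finsupp.single w 1) :
    ∀ z ∈ ((altProd (1 - T1) (1 - T2) k) (Finsupp.single w 1)
        - Finsupp.single w 1).support, z < w := by
  suffices ∀ f ∈ Submonoid.closure {1 - T1, 1 - T2}, ∀ v, LeadsWith w v → LeadsWith w (f v) from
    this _ (altProd_mem_closure _ _ k) _ (leadsWith_single w)
  intro f hf
  induction hf using Submonoid.closure_induction with
  | mem f hf =>
    rcases hf with rfl | rfl
    · exact fun v => h1.leadsWith_one_sub_apply hw1
    · exact fun v => h2.leadsWith_one_sub_apply hw2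
  | one => exact fun v hv => hv
  | mul f g _ _ hf hg => exact fun v hv => hf _ (hg v hv)

/-- Let `T1`, `T2` be reduction operators relative to `Y`, let `k ≥ 1`, and
let `w ∈ Y` with `T1(w) ≠ w` and `T2(w) ≠ w`.  Then `⟨id−T1, id−T2⟩^k(w)` equals `w` plus a
linear combination of elements of `Y` strictly smaller than `w` (so its leading monomial is
`w`). -/
theorem stmt2 {K Y : Type*} [Field K] [Fintype Y] [LinearOrder Y]
    (T1 T2 : (Y →₀ K) →ₗ[K] (Y →₀ K))
    (h1 : IsReductionOperator T1) (h2 : IsReductionOperator T2)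
    (k : ℕ) (hk : 1 ≤ k) (w : Y)
    (hw1 : T1 (Finsupp.single w 1) ≠ Finsupp.single w 1)
    (hw2 : T2 (Finsupp.single w 1) ≠ Finsupp.single w 1) :
    ∀ z ∈ ((altProd (1 - T1) (1 - T2) k) (Finsupp.single w 1)
        - Finsupp.single w 1).support, z < w :=
  stmt2_general T1 T2 h1 h2 k w hw1 hw2
end
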